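/- If X is a real random variable with E[X] = 0 and E[X²] = 1, then for every real x, its distribution satisfies the Kolmogorov bound |P(X < x) - Φ(x)| ≤ sup_{y>0} (Φ(y) - y²/(1+y²)). -/

import Mathlib

/-!
Φ is the distribution function of the standard Gaussian measure, so Φ(x) + Φ(-x) = 1 and
Φ(0) = 1/2. For x > 0, Cantelli's inequality P(X ≥ x) ≤ 1/(1 + x²) gives
Φ(x) - P(X < x) ≤ Φ(x) - x²/(1 + x²); for x ≤ 0 the crude bound Φ(x) ≤ 1/2 suffices, since
the supremum is at least 1/2 (for small z, Φ(z) - 1/2 ≈ z/√(2π) dominates z²/(1 + z²)).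
The deviation P(X < x) - Φ(x) is the same bound for -X at -x.
-/

open MeasureTheory

noncomputable def Phi (x : ℝ) : ℝ :=
  (Real.sqrt (2 * Real.pi))⁻¹ * ∫ t in Set.Iio x, Real.exp (-t ^ 2 / 2)

open ProbabilityTheory Set
open scoped NNReal

lemma Phi_eq_gaussianReal (x : ℝ) : Phi x = (gaussianReal 0 1).real (Iio x) := by
  rw [measureReal_def, gaussianReal_apply_eq_integral _ one_ne_zero, ENNReal.toReal_ofReal
    (setIntegral_nonneg measurableSet_Iio fun t _ => gaussianPDFReal_nonneg 0 1 t),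
    Phi, ← integral_const_mul]
  simp [gaussianPDFReal]

lemma Phi_add_Phi_neg (x : ℝ) : Phi x + Phi (-x) = 1 := by
  have := nullSingletonClass_gaussianReal (μ := 0) one_ne_zero
  have hneg : (gaussianReal 0 1).real (Iio (-x)) = (gaussianReal 0 1).real (Ici x) := by
    conv_lhs => rw [← neg_zero, ← gaussianReal_map_neg]
    rw [map_measureReal_apply measurable_neg measurableSet_Iio, ← measureReal_congr Ioi_ae_eq_Ici]
    simp
  rw [Phi_eq_gaussianReal, Phi_eq_gaussianReal, hneg, ← compl_Iio,
    measureReal_add_measureReal_compl measurableSet_Iio, probReal_univ]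

lemma Phi_mono : Monotone Phi := fun x y hxy => by
  simp only [Phi_eq_gaussianReal]
  exact measureReal_mono (Iio_subset_Iio hxy)

lemma Phi_zero : Phi 0 = 1 / 2 := by
  have h := Phi_add_Phi_neg 0
  rw [neg_zero] at h
  linarith

lemma Phi_le_one (x : ℝ) : Phi x ≤ 1 :=
  Phi_eq_gaussianReal x ▸ measureReal_le_one

lemma gaussianPDFReal_le_of_sq_le {μ : ℝ} {v : ℝ≥0} {s t : ℝ} (h : (t - μ) ^ 2 ≤ (s - μ) ^ 2) :
    gaussianPDFReal μ v s ≤ gaussianPDFReal μ v t := by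
  simp only [gaussianPDFReal]
  gcongr

lemma mul_gaussianPDFReal_le_Phi_sub_half {z : ℝ} (hz : 0 ≤ z) :
    z * gaussianPDFReal 0 1 z ≤ Phi z - 1 / 2 := by
  have hsplit : Phi z = Phi 0 + (gaussianReal 0 1).real (Ico 0 z) := by
    rw [Phi_eq_gaussianReal, Phi_eq_gaussianReal, ← measureReal_union (μ := gaussianReal 0 1)
      ((Iio_disjoint_Ici le_rfl).mono_right Ico_subset_Ici_self) measurableSet_Ico,
      Iio_union_Ico_eq_Iio hz]
  rw [hsplit, Phi_zero, add_sub_cancel_left, measureReal_def,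
    gaussianReal_apply_eq_integral _ one_ne_zero, ENNReal.toReal_ofReal
    (setIntegral_nonneg measurableSet_Ico fun t _ => gaussianPDFReal_nonneg 0 1 t)]
  calc z * gaussianPDFReal 0 1 z = ∫ _ in Ico 0 z, gaussianPDFReal 0 1 z := by
        simp [hz]
    _ ≤ ∫ t in Ico 0 z, gaussianPDFReal 0 1 t :=
      setIntegral_mono_on (integrable_const _) (integrable_gaussianPDFReal 0 1).integrableOn
        measurableSet_Ico fun t ht =>
          gaussianPDFReal_le_of_sq_le (by simp only [sub_zero]; nlinarith [ht.1, ht.2])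

lemma bddAbove_Phi_sub : BddAbove {y : ℝ | ∃ z > 0, y = Phi z - z ^ 2 / (1 + z ^ 2)} :=
  ⟨1, by rintro _ ⟨z, -, rfl⟩; linarith [Phi_le_one z, (by positivity : 0 ≤ z ^ 2 / (1 + z ^ 2))]⟩

lemma Phi_sub_le_sSup {z : ℝ} (hz : 0 < z) :
    Phi z - z ^ 2 / (1 + z ^ 2) ≤ sSup {y : ℝ | ∃ z > 0, y = Phi z - z ^ 2 / (1 + z ^ 2)} :=
  le_csSup bddAbove_Phi_sub ⟨z, hz, rfl⟩

lemma half_le_sSup : 1 / 2 ≤ sSup {y : ℝ | ∃ z > 0, y = Phi z - z ^ 2 / (1 + z ^ 2)} := by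
  refine le_trans ?_ (Phi_sub_le_sSup (z := 1 / 10) (by norm_num))
  have hsqrt : √(2 * Real.pi) ≤ 3 :=
    Real.sqrt_le_iff.mpr ⟨by norm_num, by nlinarith [Real.pi_lt_four]⟩
  have hexp : 1 / 2 ≤ Real.exp (-(1 / 10) ^ 2 / 2) := by
    linarith [Real.add_one_le_exp (-(1 / 10 : ℝ) ^ 2 / 2)]
  have hpdf : 1 / 6 ≤ gaussianPDFReal 0 1 (1 / 10) := by
    simp only [gaussianPDFReal, sub_zero, NNReal.coe_one, mul_one]
    calc (1 / 6 : ℝ) = 3⁻¹ * (1 / 2) := by norm_num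
      _ ≤ _ := by gcongr
  linarith [mul_gaussianPDFReal_le_Phi_sub_half (z := 1 / 10) (by norm_num)]

lemma measureReal_ge_le_integral_sq_div {Ω : Type*} {m : MeasurableSpace Ω} {μ : Measure Ω}
    [IsProbabilityMeasure μ] {X : Ω → ℝ} (hX : Integrable X μ) (hmean : ∫ ω, X ω ∂μ = 0)
    (hX2 : Integrable (fun ω => X ω ^ 2) μ) {x : ℝ} (hx : 0 < x) :
    μ.real {ω | x ≤ X ω} ≤ (∫ ω, X ω ^ 2 ∂μ) / (∫ ω, X ω ^ 2 ∂μ + x ^ 2) := by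
  set v := ∫ ω, X ω ^ 2 ∂μ
  have hv : 0 ≤ v := integral_nonneg fun ω => sq_nonneg _
  -- Markov's inequality for (X + t)², with the optimal shift t = v / x
  set t := v / x
  have ht : 0 ≤ t := by positivity
  have hexpand : (fun ω => (X ω + t) ^ 2) = fun ω => X ω ^ 2 + 2 * t * X ω + t ^ 2 := by
    funext ω; ring
  have hlin : Integrable (fun ω => X ω ^ 2 + 2 * t * X ω) μ := hX2.add (hX.const_mul _)
  have hint : Integrable (fun ω => (X ω + t) ^ 2) μ := hexpand ▸ hlin.add (integrable_const _)
  have hval : ∫ ω, (X ω + t) ^ 2 ∂μ = v + t ^ 2 := by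
    rw [hexpand, integral_add hlin (integrable_const _),
      integral_add hX2 (hX.const_mul _), integral_const_mul, hmean]
    simp [v]
  have hmarkov := mul_meas_ge_le_integral_of_nonneg
    (ae_of_all _ fun ω => sq_nonneg (X ω + t)) hint ((x + t) ^ 2)
  have hsub : μ.real {ω | x ≤ X ω} ≤ μ.real {ω | (x + t) ^ 2 ≤ (X ω + t) ^ 2} :=
    measureReal_mono fun ω (hω : x ≤ X ω) =>
      show (x + t) ^ 2 ≤ (X ω + t) ^ 2 from pow_le_pow_left₀ (by positivity) (by linarith) 2
  calc μ.real {ω | x ≤ X ω} ≤ (v + t ^ 2) / (x + t) ^ 2 := by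
        rw [le_div_iff₀ (by positivity)]
        nlinarith [sq_nonneg (x + t)]
    _ = v / (v + x ^ 2) := by
        simp only [t]
        field_simp
        ring

lemma Phi_sub_measureReal_lt_le_sSup {Ω : Type*} {m : MeasurableSpace Ω} {μ : Measure Ω}
    [IsProbabilityMeasure μ] {X : Ω → ℝ} (hX : Integrable X μ) (hmean : ∫ ω, X ω ∂μ = 0)
    (hX2 : Integrable (fun ω => X ω ^ 2) μ) (hvar : ∫ ω, X ω ^ 2 ∂μ = 1) (x : ℝ) :
    Phi x - μ.real {ω | X ω < x} ≤ sSup {y : ℝ | ∃ z > 0, y = Phi z - z ^ 2 / (1 + z ^ 2)} := by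
  rcases le_or_gt x 0 with hx | hx
  · have : Phi x ≤ 1 / 2 := Phi_zero ▸ Phi_mono hx
    linarith [half_le_sSup, measureReal_nonneg (μ := μ) (s := {ω | X ω < x})]
  · have hupper := measureReal_ge_le_integral_sq_div hX hmean hX2 hx
    rw [hvar] at hupper
    have hcover : 1 ≤ μ.real {ω | X ω < x} + μ.real {ω | x ≤ X ω} := by
      calc (1 : ℝ) = μ.real ({ω | X ω < x} ∪ {ω | x ≤ X ω}) := by
            rw [← probReal_univ (μ := μ)]
            congr
            ext ω
            simp [lt_or_ge]
        _ ≤ _ := measureReal_union_le _ _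
    have hcompl : x ^ 2 / (1 + x ^ 2) = 1 - 1 / (1 + x ^ 2) := by
      field_simp
      ring
    linarith [Phi_sub_le_sSup hx]

theorem stmt_16_general {Ω : Type*} [MeasureSpace Ω] (μ : Measure Ω) [IsProbabilityMeasure μ]
    (X : Ω → ℝ)
    (hX : Integrable X μ) (hmean : ∫ ω, X ω ∂μ = 0)
    (hX2 : Integrable (fun ω => X ω ^ 2) μ) (hvar : ∫ ω, X ω ^ 2 ∂μ = 1)
    (x : ℝ) :
    |(μ {ω | X ω < x}).toReal - Phi x| ≤
      sSup {y : ℝ | ∃ z > 0, y = Phi z - z ^ 2 / (1 + z ^ 2)} := by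
  rw [← measureReal_def, abs_sub_le_iff]
  refine ⟨?_, Phi_sub_measureReal_lt_le_sSup hX hmean hX2 hvar x⟩
  have hneg := Phi_sub_measureReal_lt_le_sSup (X := fun ω => -X ω) hX.neg
    (by rw [integral_neg, hmean, neg_zero]) (by simpa using hX2) (by simpa using hvar) (-x)
  simp only [neg_lt_neg_iff] at hneg
  have htails : μ.real {ω | X ω < x} + μ.real {ω | x < X ω} ≤ 1 :=
    calc _ = μ.real ({ω | X ω < x} ∪ {ω | x < X ω}) :=
          (measureReal_union₀ (hX.aemeasurable.nullMeasurable measurableSet_Ioi)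
            (disjoint_left.mpr fun ω (h₁ : X ω < x) (h₂ : x < X ω) =>
              h₁.not_gt h₂).aedisjoint).symm
      _ ≤ 1 := measureReal_le_one
  linarith [Phi_add_Phi_neg x]

theorem stmt_16 {Ω : Type*} [MeasureSpace Ω] (μ : Measure Ω) [IsProbabilityMeasure μ]
    (X : Ω → ℝ) (hXm : Measurable X)
    (hX : Integrable X μ) (hmean : ∫ ω, X ω ∂μ = 0)
    (hX2 : Integrable (fun ω => X ω ^ 2) μ) (hvar : ∫ ω, X ω ^ 2 ∂μ = 1)
    (x : ℝ) :
    |(μ {ω | X ω < x}).toReal - Phi x| ≤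
      sSup {y : ℝ | ∃ z > 0, y = Phi z - z ^ 2 / (1 + z ^ 2)} :=
  stmt_16_general μ X hX hmean hX2 hvar x
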